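/- The q-logarithm S_q satisfies the second-order q-difference equation (1-qx)·S_q(q^2 x) - (2-qx)·S_q(qx) + S_q(x) = qx for all x ∈ ℂ, where 0 < q < 1. -/

import Mathlib

/-!
Writing `(x;q)_{k+1} = (1 - x) (qx;q)_k` and cancelling the factor `1 - q^{k+1}` termwise gives the
first-order relation `S_q(qx) - S_q(x) = -x U(qx)` with `U(x) = ∑_k q^{k+1} (x;q)_k`, and splitting
off the first term of `U` gives `U(x) = q + q (1 - x) U(qx)`. The second-order equation is
`(1 - qx)` times the first relation at `qx`, minus the relation at `x`, simplified by the one for `U`.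
-/

noncomputable def qPoch (q x : ℂ) (k : ℕ) : ℂ := ∏ j ∈ Finset.range k, (1 - x * q ^ j)

noncomputable def Sq (q : ℝ) (x : ℂ) : ℂ :=
  -∑' k : ℕ, ((q : ℂ) ^ (k + 1) / (1 - (q : ℂ) ^ (k + 1))) * qPoch q x (k + 1)

open Finset

noncomputable def qPochSum (q x : ℂ) : ℂ := ∑' k : ℕ, q ^ (k + 1) * qPoch q x k

lemma qPoch_succ (q x : ℂ) (k : ℕ) : qPoch q x (k + 1) = qPoch q x k * (1 - x * q ^ k) :=
  prod_range_succ _ _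

lemma qPoch_succ_eq_mul_qPoch_mul (q x : ℂ) (k : ℕ) :
    qPoch q x (k + 1) = (1 - x) * qPoch q (q * x) k := by
  simp only [qPoch, prod_range_succ', pow_zero, mul_one, pow_succ', mul_left_comm, mul_assoc,
    mul_comm _ (1 - x)]

lemma norm_qPoch_le {q : ℂ} (hq : ‖q‖ < 1) (x : ℂ) (k : ℕ) :
    ‖qPoch q x k‖ ≤ Real.exp (‖x‖ / (1 - ‖q‖)) :=
  calc ‖qPoch q x k‖ ≤ ∏ j ∈ range k, (1 + ‖x‖ * ‖q‖ ^ j) := by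
        rw [qPoch, norm_prod]
        gcongr with j
        exact (norm_sub_le _ _).trans_eq (by simp)
    _ ≤ Real.exp (∑ j ∈ range k, ‖x‖ * ‖q‖ ^ j) :=
        Real.prod_one_add_le_exp_sum _ fun _ => by positivity
    _ ≤ Real.exp (‖x‖ / (1 - ‖q‖)) := by
        rw [← mul_sum, div_eq_mul_one_div]
        gcongr
        simpa using geom_sum_Ico_le_of_lt_one (m := 0) (n := k) (norm_nonneg q) hq

lemma summable_mul_qPoch {ι : Type*} {q : ℂ} (hq : ‖q‖ < 1) (x : ℂ) {c : ι → ℂ}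
    (hc : Summable fun i => ‖c i‖) (m : ι → ℕ) : Summable fun i => c i * qPoch q x (m i) :=
  (hc.mul_right _).of_norm_bounded fun i => by
    rw [norm_mul]
    gcongr
    exact norm_qPoch_le hq x (m i)

lemma one_sub_norm_le_norm_one_sub_pow {q : ℂ} (hq : ‖q‖ ≤ 1) {n : ℕ} (hn : n ≠ 0) :
    1 - ‖q‖ ≤ ‖1 - q ^ n‖ :=
  calc 1 - ‖q‖ ≤ 1 - ‖q‖ ^ n := by gcongr; exact pow_le_of_le_one (norm_nonneg q) hq hn
    _ = ‖(1 : ℂ)‖ - ‖q ^ n‖ := by simp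
    _ ≤ ‖1 - q ^ n‖ := norm_sub_norm_le _ _

lemma summable_norm_pow_succ_div_one_sub_pow_succ {q : ℂ} (hq : ‖q‖ < 1) :
    Summable fun k : ℕ => ‖q ^ (k + 1) / (1 - q ^ (k + 1))‖ := by
  refine ((summable_geometric_of_lt_one (norm_nonneg q) hq).div_const (1 - ‖q‖)).of_nonneg_of_le
    (fun _ => norm_nonneg _) fun k => ?_
  rw [norm_div, norm_pow]
  exact div_le_div₀ (by positivity) (pow_le_pow_of_le_one (norm_nonneg q) hq.le k.le_succ)
    (sub_pos.mpr hq) (one_sub_norm_le_norm_one_sub_pow hq.le k.succ_ne_zero)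

lemma Sq_mul_sub_Sq {q : ℝ} (hq : ‖(q : ℂ)‖ < 1) (x : ℂ) :
    Sq q (q * x) - Sq q x = -(x * qPochSum q (q * x)) := by
  have hS (y : ℂ) := summable_mul_qPoch hq y (summable_norm_pow_succ_div_one_sub_pow_succ hq)
    (· + 1)
  rw [Sq, Sq, qPochSum, neg_sub_neg, ← (hS x).tsum_sub (hS _), ← tsum_mul_left, ← tsum_neg]
  refine tsum_congr fun k => ?_
  have hne : (1 : ℂ) - q ^ (k + 1) ≠ 0 := norm_pos_iff.mp <|
    (sub_pos.mpr hq).trans_le (one_sub_norm_le_norm_one_sub_pow hq.le k.succ_ne_zero)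
  rw [qPoch_succ_eq_mul_qPoch_mul, qPoch_succ]
  field_simp
  ring

lemma qPochSum_eq_add_mul_qPochSum_mul {q : ℂ} (hq : ‖q‖ < 1) (x : ℂ) :
    qPochSum q x = q + q * (1 - x) * qPochSum q (q * x) := by
  have hU : Summable fun k : ℕ => q ^ (k + 1) * qPoch q x k := summable_mul_qPoch hq x
    ((summable_nat_add_iff 1).mpr (summable_norm_geometric_of_norm_lt_one hq)) id
  rw [qPochSum, hU.tsum_eq_zero_add, qPochSum, ← tsum_mul_left]
  simp only [qPoch_succ_eq_mul_qPoch_mul]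
  congr 1
  · simp [qPoch]
  · exact tsum_congr fun k => by ring

theorem qlog_second_order_qdifference (q : ℝ) (hq0 : 0 < q) (hq1 : q < 1) (x : ℂ) :
    (1 - (q : ℂ) * x) * Sq q ((q : ℂ) ^ 2 * x) - (2 - (q : ℂ) * x) * Sq q ((q : ℂ) * x)
      + Sq q x = (q : ℂ) * x := by
  have hq : ‖(q : ℂ)‖ < 1 := by rwa [Complex.norm_real, Real.norm_of_nonneg hq0.le]
  rw [show (q : ℂ) ^ 2 * x = q * (q * x) by ring]
  linear_combination (1 - (q : ℂ) * x) * Sq_mul_sub_Sq hq (q * x) - Sq_mul_sub_Sq hq x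
    + x * qPochSum_eq_add_mul_qPochSum_mul hq (q * x)
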